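/- arXiv:1008.4877 — 5 statements merged into one kernel-verified Lean document; each statement's English description precedes it below -/
import Mathlib

section
/- Let n ≥ 1, let Σ be a real symmetric 2n×2n matrix written in block form Σ = [[ΔXX, ΔXP], [ΔXPᵀ, ΔPP]] with n×n blocks (ΔXX and ΔPP symmetric), and let Ω = [[A, B], [-B, C]] where A and C are real antisymmetric n×n matrices and B is a real symmetric n×n matrix. If the complex Hermitian matrix Σ + iΩ is positive semidefinite, then for all indices 1 ≤ j, k ≤ n the following three inequalities hold: ΔXX_{jj}·ΔXX_{kk} ≥ (ΔXX_{jk})² + (A_{jk})², ΔPP_{jj}·ΔPP_{kk} ≥ (ΔPP_{jk})² + (C_{jk})², and ΔXX_{jj}·ΔPP_{kk} ≥ (ΔXP_{jk})² + (B_{jk})². -/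
/-!
Every `2 × 2` principal minor of a positive semidefinite matrix `M` is nonnegative, i.e.
`|M a b|² ≤ M a a · M b b`. For `M = Σ + iΩ` with `Σ, Ω` real, `M a b = Σ a b + i Ω a b` has
squared modulus `Σ a b² + Ω a b²`, and the diagonal entries have real part `Σ a a`; the three
inequalities are this bound at the index pairs `(xⱼ, xₖ)`, `(pⱼ, pₖ)` and `(xⱼ, pₖ)`.
-/

open Matrix Complex
open scoped ComplexOrder

theorem Matrix.PosSemidef.norm_sq_apply_le_re_mul_re {𝕜 ι : Type*} [RCLike 𝕜] [Fintype ι]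
    {M : Matrix ι ι 𝕜} (hM : M.PosSemidef) (a b : ι) :
    ‖M a b‖ ^ 2 ≤ RCLike.re (M a a) * RCLike.re (M b b) := by
  have hdet := (hM.submatrix ![a, b]).det_nonneg
  rw [det_fin_two] at hdet
  simp only [submatrix_apply, cons_val_zero, cons_val_one] at hdet
  rw [← hM.isHermitian.apply b a, ← hM.isHermitian.coe_re_apply_self a,
    ← hM.isHermitian.coe_re_apply_self b, RCLike.star_def, RCLike.mul_conj] at hdet
  exact_mod_cast sub_nonneg.mp hdet

theorem sq_add_sq_le_mul_of_posSemidef {ι : Type*} [Fintype ι] {S W : Matrix ι ι ℝ}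
    (h : (S.map (fun x : ℝ => (x : ℂ)) + I • W.map (fun x : ℝ => (x : ℂ))).PosSemidef)
    (a b : ι) : S a b ^ 2 + W a b ^ 2 ≤ S a a * S b b := by
  have := h.norm_sq_apply_le_re_mul_re a b
  rw [Complex.sq_norm, normSq_apply] at this
  simpa [sq] using this

theorem uncertainty_inequalities_of_posSemidef_general (n : ℕ)
    (ΔXX ΔXP ΔPP A B C : Matrix (Fin n) (Fin n) ℝ)
    (hpos : ((Matrix.fromBlocks ΔXX ΔXP ΔXPᵀ ΔPP).map (fun x : ℝ => (x : ℂ))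
        + Complex.I •
          ((Matrix.fromBlocks A B (-B) C).map (fun x : ℝ => (x : ℂ)))).PosSemidef) :
    ∀ j k : Fin n,
      ΔXX j j * ΔXX k k ≥ (ΔXX j k) ^ 2 + (A j k) ^ 2 ∧
      ΔPP j j * ΔPP k k ≥ (ΔPP j k) ^ 2 + (C j k) ^ 2 ∧
      ΔXX j j * ΔPP k k ≥ (ΔXP j k) ^ 2 + (B j k) ^ 2 := fun j k =>
  ⟨sq_add_sq_le_mul_of_posSemidef hpos (.inl j) (.inl k),
    sq_add_sq_le_mul_of_posSemidef hpos (.inr j) (.inr k),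
    sq_add_sq_le_mul_of_posSemidef hpos (.inl j) (.inr k)⟩

/-- If `Σ = [[ΔXX, ΔXP],[ΔXPᵀ, ΔPP]]` is real symmetric and
`Ω = [[A, B],[-B, C]]` with `A, C` antisymmetric and `B` symmetric,
and the complex Hermitian matrix `Σ + iΩ` is positive semidefinite,
then the generalized uncertainty inequalities hold entrywise. -/
theorem uncertainty_inequalities_of_posSemidef (n : ℕ) (hn : 1 ≤ n)
    (ΔXX ΔXP ΔPP A B C : Matrix (Fin n) (Fin n) ℝ)
    (hXX : ΔXXᵀ = ΔXX) (hPP : ΔPPᵀ = ΔPP)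
    (hA : Aᵀ = -A) (hC : Cᵀ = -C) (hB : Bᵀ = B)
    (hpos : ((Matrix.fromBlocks ΔXX ΔXP ΔXPᵀ ΔPP).map (fun x : ℝ => (x : ℂ))
        + Complex.I •
          ((Matrix.fromBlocks A B (-B) C).map (fun x : ℝ => (x : ℂ)))).PosSemidef) :
    ∀ j k : Fin n,
      ΔXX j j * ΔXX k k ≥ (ΔXX j k) ^ 2 + (A j k) ^ 2 ∧
      ΔPP j j * ΔPP k k ≥ (ΔPP j k) ^ 2 + (C j k) ^ 2 ∧
      ΔXX j j * ΔPP k k ≥ (ΔXP j k) ^ 2 + (B j k) ^ 2 :=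
  uncertainty_inequalities_of_posSemidef_general n ΔXX ΔXP ΔPP A B C hpos
end

section
/- Let Σ be a real symmetric 2n×2n matrix written in block form Σ = [[ΔXX, ΔXP], [ΔXPᵀ, ΔPP]] with n×n blocks, let ε > 0, and let J be the standard symplectic 2n×2n matrix. If the complex Hermitian matrix Σ + i·ε·J is positive semidefinite, then for every index 1 ≤ j ≤ n one has the Robertson–Schrödinger type inequality ΔXX_{jj}·ΔPP_{jj} ≥ (ΔXP_{jj})² + ε². -/
open Matrix Complex
open scoped ComplexOrder

theorem Matrix.PosSemidef.norm_apply_sq_le_re_mul_re {𝕜 n : Type*} [RCLike 𝕜] [Fintype n]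
    {A : Matrix n n 𝕜} (hA : A.PosSemidef) (i j : n) :
    ‖A i j‖ ^ 2 ≤ RCLike.re (A i i) * RCLike.re (A j j) := by
  have hdiag (k : n) : (RCLike.re (A k k) : 𝕜) = A k k :=
    RCLike.conj_eq_iff_re.mp (hA.isHermitian.apply k k)
  have hdet := (hA.submatrix ![i, j]).det_nonneg
  simp only [det_fin_two, submatrix_apply, Matrix.cons_val_zero, Matrix.cons_val_one] at hdet
  rw [← hdiag i, ← hdiag j, ← hA.isHermitian.apply j i, RCLike.star_def, RCLike.mul_conj] at hdet
  exact_mod_cast sub_nonneg.mp hdet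

theorem robertson_schroedinger_of_posSemidef_general (n : ℕ)
    (ΔXX ΔXP ΔPP : Matrix (Fin n) (Fin n) ℝ)
    (ε : ℝ)
    (hpos : ((Matrix.fromBlocks ΔXX ΔXP ΔXPᵀ ΔPP).map (fun x : ℝ => (x : ℂ))
        + (Complex.I * (ε : ℂ)) •
          ((Matrix.fromBlocks (0 : Matrix (Fin n) (Fin n) ℝ) 1 (-1) 0).map
            (fun x : ℝ => (x : ℂ)))).PosSemidef) :
    ∀ j : Fin n, ΔXX j j * ΔPP j j ≥ (ΔXP j j) ^ 2 + ε ^ 2 := by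
  intro j
  -- the entry of `Σ + iεJ` in position `(j, n + j)` is `ΔXP j j + iε`
  have hminor := hpos.norm_apply_sq_le_re_mul_re (Sum.inl j) (Sum.inr j)
  simpa [Complex.sq_norm, Complex.normSq_add_mul_I, mul_comm I] using hminor

/-- If `Σ = [[ΔXX, ΔXP],[ΔXPᵀ, ΔPP]]` is real symmetric, `ε > 0`, and the
complex Hermitian matrix `Σ + i·ε·J` is positive semidefinite (with
`J = [[0, I],[-I, 0]]` the standard symplectic matrix), then the
Robertson–Schrödinger inequalities hold. -/
theorem robertson_schroedinger_of_posSemidef (n : ℕ)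
    (ΔXX ΔXP ΔPP : Matrix (Fin n) (Fin n) ℝ)
    (hXX : ΔXXᵀ = ΔXX) (hPP : ΔPPᵀ = ΔPP)
    (ε : ℝ) (hε : 0 < ε)
    (hpos : ((Matrix.fromBlocks ΔXX ΔXP ΔXPᵀ ΔPP).map (fun x : ℝ => (x : ℂ))
        + (Complex.I * (ε : ℂ)) •
          ((Matrix.fromBlocks (0 : Matrix (Fin n) (Fin n) ℝ) 1 (-1) 0).map
            (fun x : ℝ => (x : ℂ)))).PosSemidef) :
    ∀ j : Fin n, ΔXX j j * ΔPP j j ≥ (ΔXP j j) ^ 2 + ε ^ 2 :=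
  robertson_schroedinger_of_posSemidef_general n ΔXX ΔXP ΔPP ε hpos
end

section
/- Let Σ be a real symmetric 2n×2n matrix and Ω an invertible real antisymmetric 2n×2n matrix. If the complex Hermitian matrix Σ + iΩ is positive semidefinite, then Σ is positive definite. -/
/-!
On a real vector `x`, the Hermitian form of `Σ + iΩ` takes the value `xᵀΣx + i xᵀΩx = xᵀΣx`,
since antisymmetry kills `xᵀΩx`; hence `xᵀΣx ≥ 0`. If `xᵀΣx = 0`, positive semidefiniteness
forces `(Σ + iΩ)x = 0`, whose imaginary part is `Ωx = 0`, so `x = 0` as `Ω` is invertible.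
-/

open Matrix Complex
open scoped ComplexOrder

namespace Matrix

variable {ι : Type*} [Fintype ι]

theorem dotProduct_mulVec_self_eq_zero_of_transpose_eq_neg {R : Type*} [CommRing R]
    [IsAddTorsionFree R] {A : Matrix ι ι R} (hA : Aᵀ = -A) (x : ι → R) :
    x ⬝ᵥ A *ᵥ x = 0 :=
  self_eq_neg.mp <| calc
    x ⬝ᵥ A *ᵥ x = x ⬝ᵥ Aᵀ *ᵥ x := by rw [mulVec_transpose, dotProduct_mulVec, dotProduct_comm]
    _ = -(x ⬝ᵥ A *ᵥ x) := by rw [hA, neg_mulVec, dotProduct_neg]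

theorem map_ofReal_add_I_smul_mulVec (S Ω : Matrix ι ι ℝ) (x : ι → ℝ) :
    (S.map ofReal + I • Ω.map ofReal) *ᵥ (ofReal ∘ x) = fun i ↦ ⟨(S *ᵥ x) i, (Ω *ᵥ x) i⟩ := by
  funext i
  apply Complex.ext <;> simp [mulVec, dotProduct]

theorem star_dotProduct_map_ofReal_add_I_smul_mulVec (S Ω : Matrix ι ι ℝ) (x : ι → ℝ) :
    star (ofReal ∘ x) ⬝ᵥ (S.map ofReal + I • Ω.map ofReal) *ᵥ (ofReal ∘ x) =
      ⟨x ⬝ᵥ S *ᵥ x, x ⬝ᵥ Ω *ᵥ x⟩ := by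
  rw [map_ofReal_add_I_smul_mulVec]
  apply Complex.ext <;> simp [dotProduct]

end Matrix

/-- If `Σ` is real symmetric, `Ω` is an invertible real antisymmetric matrix,
and the complex Hermitian matrix `Σ + iΩ` is positive semidefinite,
then `Σ` is positive definite. -/
theorem posDef_of_posSemidef_add_I_smul (n : ℕ)
    (S Ω : Matrix (Fin n ⊕ Fin n) (Fin n ⊕ Fin n) ℝ)
    (hSsym : Sᵀ = S) (hΩinv : IsUnit Ω) (hΩanti : Ωᵀ = -Ω)
    (hpos : (S.map (fun x : ℝ => (x : ℂ))
        + Complex.I • (Ω.map (fun x : ℝ => (x : ℂ)))).PosSemidef) :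
    S.PosDef := by
  refine posDef_iff_dotProduct_mulVec.mpr ⟨hSsym, fun x hx ↦ ?_⟩
  have hquad := star_dotProduct_map_ofReal_add_I_smul_mulVec S Ω x
  rw [dotProduct_mulVec_self_eq_zero_of_transpose_eq_neg hΩanti] at hquad
  have hnonneg : 0 ≤ x ⬝ᵥ S *ᵥ x := by
    simpa [hquad, Complex.le_def] using hpos.dotProduct_mulVec_nonneg (ofReal ∘ x)
  refine hnonneg.lt_of_ne fun hzero ↦ hx ?_
  have hker := (hpos.dotProduct_mulVec_zero_iff _).mp (hquad.trans (by rw [← hzero]; rfl))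
  rw [map_ofReal_add_I_smul_mulVec] at hker
  have hΩx : Ω *ᵥ x = 0 := funext fun i ↦ congrArg im (congrFun hker i)
  exact mulVec_injective_iff_isUnit.mpr hΩinv (hΩx.trans (mulVec_zero Ω).symm)
end

section
/- Let n = 2 and let Σ₀ be the real symmetric 4×4 matrix [[1,-1,0,0],[-1,1,0,0],[0,0,1,0],[0,0,0,1]], and let J be the standard symplectic 4×4 matrix. Then: (a) Σ₀ is positive semidefinite; (b) writing Σ₀ = [[ΔXX, ΔXP],[ΔXPᵀ, ΔPP]] in 2×2 block form, all the inequalities ΔXX_{jj}·ΔXX_{kk} ≥ (ΔXX_{jk})², ΔPP_{jj}·ΔPP_{kk} ≥ (ΔPP_{jk})², and ΔXX_{jj}·ΔPP_{kk} ≥ (ΔXP_{jk})² + δ_{jk} hold for all 1 ≤ j,k ≤ 2 (δ_{jk} the Kronecker delta); yet (c) the complex Hermitian matrix Σ₀ + iJ is not positive semidefinite. Hence for n > 1 the uncertainty inequalities do not imply the matrix condition Σ + iJ ≥ 0. -/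
open Matrix Complex
open scoped ComplexOrder

/-- The counterexample matrix `Σ₀ = [[1,-1,0,0],[-1,1,0,0],[0,0,1,0],[0,0,0,1]]`
in `2×2` block form: `ΔXX = [[1,-1],[-1,1]]`, `ΔXP = 0`, `ΔPP = I`. -/
noncomputable def counterexampleXX : Matrix (Fin 2) (Fin 2) ℝ := !![1, -1; -1, 1]

noncomputable def counterexampleXP : Matrix (Fin 2) (Fin 2) ℝ := 0

noncomputable def counterexamplePP : Matrix (Fin 2) (Fin 2) ℝ := 1

noncomputable def counterexampleSigma : Matrix (Fin 2 ⊕ Fin 2) (Fin 2 ⊕ Fin 2) ℝ :=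
  Matrix.fromBlocks counterexampleXX counterexampleXP counterexampleXPᵀ counterexamplePP

/-- The standard symplectic `4×4` matrix (n = 2). -/
noncomputable def stdSymplectic2 : Matrix (Fin 2 ⊕ Fin 2) (Fin 2 ⊕ Fin 2) ℝ :=
  Matrix.fromBlocks 0 1 (-1) 0

/-!
Σ₀ + iJ fails to be positive semidefinite because its quadratic form at a vector `(a, i b)` with
`a, b` real has real part `aᵀ ΔXX a + bᵀ ΔPP b - 2 a·b`; for `a = b = (1, 1)` the vector `a` lies in
the kernel of `ΔXX`, so this is `0 + 2 - 4 < 0`. The 2×2 uncertainty inequalities only see the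
diagonal blocks entrywise and miss this coupling between `ΔXX` and `ΔPP` through `J`.
-/

namespace Matrix

theorem PosSemidef.sq_apply_le_mul_apply {n : Type*} {M : Matrix n n ℝ} (hM : M.PosSemidef)
    (j k : n) : M j k ^ 2 ≤ M j j * M k k := by
  have hdet := (hM.submatrix ![j, k]).det_nonneg
  have hsymm : M k j = M j k := by simpa using hM.1.apply j k
  rw [det_fin_two] at hdet
  simp only [submatrix_apply, cons_val_zero, cons_val_one, hsymm] at hdet
  linarith [sq (M j k)]

theorem posSemidef_fromBlocks_zero_one_iff {m n : Type*} [Finite m] [Fintype n] [DecidableEq n]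
    {A : Matrix m m ℝ} : (fromBlocks A 0 0 (1 : Matrix n n ℝ)).PosSemidef ↔ A.PosSemidef := by
  have : Invertible (1 : Matrix n n ℝ) := invertibleOne
  simpa using PosDef.fromBlocks₂₂ A (0 : Matrix m n ℝ) PosDef.one

/-- The off-diagonal blocks `B`, `C` only enter the imaginary part of the quadratic form at
`(a, i b)`. -/
theorem two_mul_dotProduct_le_of_posSemidef_add_I_smul_symplectic {n : Type*} [Fintype n]
    [DecidableEq n] {A B C D : Matrix n n ℝ}
    (h : ((fromBlocks A B C D).map ((↑) : ℝ → ℂ) +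
      I • (fromBlocks 0 1 (-1) 0 : Matrix (n ⊕ n) (n ⊕ n) ℝ).map ((↑) : ℝ → ℂ)).PosSemidef)
    (a b : n → ℝ) :
    2 * (a ⬝ᵥ b) ≤ a ⬝ᵥ A *ᵥ a + b ⬝ᵥ D *ᵥ b := by
  have hform := h.dotProduct_mulVec_nonneg (Sum.elim (fun i => (a i : ℂ)) (fun i => I * b i))
  have hre : 0 ≤ a ⬝ᵥ (A *ᵥ a - b) + b ⬝ᵥ (-a + D *ᵥ b) := by
    simpa [dotProduct, mulVec, Fintype.sum_sum_type, one_apply, sub_eq_add_neg]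
      using (Complex.le_def.mp hform).1
  rw [dotProduct_sub, dotProduct_add, dotProduct_neg, dotProduct_comm b a] at hre
  linarith

end Matrix

theorem counterexampleXX_eq_vecMulVec : counterexampleXX = vecMulVec ![1, -1] ![1, -1] := by
  ext i j
  fin_cases i <;> fin_cases j <;> simp [counterexampleXX, vecMulVec]

theorem counterexampleXX_apply_self (j : Fin 2) : counterexampleXX j j = 1 := by
  fin_cases j <;> simp [counterexampleXX]

theorem posSemidef_counterexampleXX : counterexampleXX.PosSemidef := by
  simpa [counterexampleXX_eq_vecMulVec] using posSemidef_vecMulVec_self_star ![(1 : ℝ), -1]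

theorem posSemidef_counterexampleSigma : counterexampleSigma.PosSemidef := by
  simpa [counterexampleSigma, counterexampleXP, counterexamplePP]
    using posSemidef_fromBlocks_zero_one_iff.mpr posSemidef_counterexampleXX

/-- For `n = 2`, the matrix `Σ₀` is positive semidefinite and satisfies all the
uncertainty inequalities (with `a = c = 0`, `b = δ_{jk}`), yet `Σ₀ + iJ` is
not positive semidefinite: the inequalities do not imply `Σ + iJ ≥ 0`. -/
theorem counterexample_uncertainty_not_posSemidef :
    counterexampleSigma.PosSemidef ∧
    (∀ j k : Fin 2,
      counterexampleXX j j * counterexampleXX k k ≥ (counterexampleXX j k) ^ 2 ∧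
      counterexamplePP j j * counterexamplePP k k ≥ (counterexamplePP j k) ^ 2 ∧
      counterexampleXX j j * counterexamplePP k k ≥
        (counterexampleXP j k) ^ 2 + (if j = k then 1 else 0)) ∧
    ¬ (counterexampleSigma.map (fun x : ℝ => (x : ℂ))
        + Complex.I • (stdSymplectic2.map (fun x : ℝ => (x : ℂ)))).PosSemidef := by
  refine ⟨posSemidef_counterexampleSigma, fun j k => ⟨?_, ?_, ?_⟩, fun h => ?_⟩
  · exact posSemidef_counterexampleXX.sq_apply_le_mul_apply j k
  · exact PosSemidef.one.sq_apply_le_mul_apply j k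
  · by_cases hjk : j = k <;>
      simp [counterexampleXX_apply_self, counterexampleXP, counterexamplePP, hjk]
  · have := two_mul_dotProduct_le_of_posSemidef_add_I_smul_symplectic h ![1, 1] ![1, 1]
    norm_num [counterexampleXX, counterexamplePP, dotProduct, mulVec, Fin.sum_univ_two] at this
end

section
/- Let M be a real symmetric positive definite 2n×2n matrix and J the standard symplectic 2n×2n matrix. Then every complex eigenvalue of the matrix J·M is purely imaginary and nonzero, i.e., every eigenvalue has the form ±iλ with λ a positive real number. -/
/-!
If `J M v = μ v` with `v ≠ 0`, then `v* (M J M) v = μ · v* M v`. The matrix `M J M` is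
skew-Hermitian, so the left side is purely imaginary, while `v* M v > 0`; hence `Re μ = 0`.
Since `J` and `M` are invertible, `μ ≠ 0`.
-/

open Matrix Complex

/-- The standard symplectic `2n×2n` matrix. -/
noncomputable def stdSymp (n : ℕ) : Matrix (Fin n ⊕ Fin n) (Fin n ⊕ Fin n) ℝ :=
  Matrix.fromBlocks 0 1 (-1) 0

namespace Matrix
open scoped ComplexOrder
variable {ι 𝕜 : Type*} [RCLike 𝕜]

lemma conjTranspose_map_algebraMap {m : Type*} (A : Matrix m ι ℝ) :
    (A.map (algebraMap ℝ 𝕜))ᴴ = Aᵀ.map (algebraMap ℝ 𝕜) := by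
  rw [← conjTranspose_eq_transpose_of_trivial, conjTranspose_map]
  exact fun x => algebraMap_star_comm x

variable [Fintype ι]

open scoped MatrixOrder in
lemma PosDef.map_algebraMap [DecidableEq ι] {M : Matrix ι ι ℝ} (hM : M.PosDef) :
    (M.map (algebraMap ℝ 𝕜)).PosDef := by
  obtain ⟨B, rfl⟩ := CStarAlgebra.nonneg_iff_eq_star_mul_self.mp hM.posSemidef.nonneg
  have hmap : (star B * B).map (algebraMap ℝ 𝕜) =
      (B.map (algebraMap ℝ 𝕜))ᴴ * B.map (algebraMap ℝ 𝕜) := by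
    rw [Matrix.map_mul, star_eq_conjTranspose, conjTranspose_eq_transpose_of_trivial,
      conjTranspose_map_algebraMap]
  rw [hmap, (posSemidef_conjTranspose_mul_self _).posDef_iff_isUnit, ← hmap]
  exact hM.isUnit.map (algebraMap ℝ 𝕜).mapMatrix

lemma star_star_dotProduct_mulVec (A : Matrix ι ι 𝕜) (v : ι → 𝕜) :
    star (star v ⬝ᵥ A *ᵥ v) = star v ⬝ᵥ Aᴴ *ᵥ v := by
  rw [star_dotProduct, star_star, star_mulVec, dotProduct_mulVec]

lemma re_star_dotProduct_mulVec_self_eq_zero {S : Matrix ι ι 𝕜} (hS : Sᴴ = -S) (v : ι → 𝕜) :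
    RCLike.re (star v ⬝ᵥ S *ᵥ v) = 0 := by
  have h := congrArg RCLike.re (star_star_dotProduct_mulVec S v)
  rw [hS, neg_mulVec, dotProduct_neg, RCLike.star_def, RCLike.conj_re, map_neg] at h
  linarith

lemma re_eq_zero_of_mul_mulVec_eq_smul {S P : Matrix ι ι 𝕜} (hS : Sᴴ = -S) (hP : P.PosDef)
    {μ : 𝕜} {v : ι → 𝕜} (hv : v ≠ 0) (h : (S * P) *ᵥ v = μ • v) : RCLike.re μ = 0 := by
  obtain ⟨hc_re, hc_im⟩ := RCLike.pos_iff.mp (hP.dotProduct_mulVec_pos hv)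
  have hPSP : (P * S * P)ᴴ = -(P * S * P) := by
    rw [conjTranspose_mul, conjTranspose_mul, hP.isHermitian.eq, hS]
    noncomm_ring
  have hform : star v ⬝ᵥ (P * S * P) *ᵥ v = μ * (star v ⬝ᵥ P *ᵥ v) := by
    rw [Matrix.mul_assoc, ← mulVec_mulVec, h, mulVec_smul, dotProduct_smul, smul_eq_mul]
  have := re_star_dotProduct_mulVec_self_eq_zero hPSP v
  rw [hform, RCLike.mul_re, hc_im, mul_zero, sub_zero] at this
  exact (mul_eq_zero.mp this).resolve_right hc_re.ne'

lemma ne_zero_of_mulVec_eq_smul {K : Type*} [Field K] [DecidableEq ι] {A : Matrix ι ι K}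
    (hA : IsUnit A) {μ : K} {v : ι → K} (hv : v ≠ 0) (h : A *ᵥ v = μ • v) : μ ≠ 0 := by
  rintro rfl
  rw [zero_smul, ← mulVec_zero A] at h
  exact hv (mulVec_injective_iff_isUnit.mpr hA h)

end Matrix

lemma stdSymp_eq_neg_J (n : ℕ) : stdSymp n = -J (Fin n) ℝ := by
  simp [stdSymp, J, fromBlocks_neg]

lemma stdSymp_transpose (n : ℕ) : (stdSymp n)ᵀ = -stdSymp n := by
  rw [stdSymp_eq_neg_J, transpose_neg, J_transpose]

lemma isUnit_stdSymp (n : ℕ) : IsUnit (stdSymp n) := by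
  rw [stdSymp_eq_neg_J]
  exact ((isUnit_iff_isUnit_det _).mpr (isUnit_det_J _ _)).neg

lemma Complex.exists_pos_eq_I_mul_or_eq_neg_I_mul {z : ℂ} (hre : z.re = 0) (hz : z ≠ 0) :
    ∃ r : ℝ, 0 < r ∧ (z = I * r ∨ z = -(I * r)) := by
  have him : z.im ≠ 0 := fun him => hz (Complex.ext hre him)
  refine ⟨|z.im|, abs_pos.mpr him, ?_⟩
  rcases abs_choice z.im with h | h <;> rw [h]
  · exact Or.inl (Complex.ext (by simp [hre]) (by simp))
  · exact Or.inr (Complex.ext (by simp [hre]) (by simp))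

theorem eigenvalues_JM_purely_imaginary_general (n : ℕ)
    (M : Matrix (Fin n ⊕ Fin n) (Fin n ⊕ Fin n) ℝ)
    (hMpos : M.PosDef) :
    ∀ (μ : ℂ) (v : (Fin n ⊕ Fin n) → ℂ), v ≠ 0 →
      ((stdSymp n * M).map (fun x : ℝ => (x : ℂ))) *ᵥ v = μ • v →
      μ.re = 0 ∧ μ ≠ 0 ∧
        ∃ lam : ℝ, 0 < lam ∧ (μ = Complex.I * lam ∨ μ = -(Complex.I * lam)) := by
  intro μ v hv hev
  have hskew : ((stdSymp n).map (algebraMap ℝ ℂ))ᴴ = -(stdSymp n).map (algebraMap ℝ ℂ) := by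
    rw [conjTranspose_map_algebraMap, stdSymp_transpose,
      Matrix.map_neg _ (map_neg (algebraMap ℝ ℂ))]
  have hre : μ.re = 0 :=
    re_eq_zero_of_mul_mulVec_eq_smul hskew hMpos.map_algebraMap hv (by rwa [← Matrix.map_mul])
  have hunit : IsUnit ((stdSymp n * M).map (algebraMap ℝ ℂ)) :=
    ((isUnit_stdSymp n).mul hMpos.isUnit).map (algebraMap ℝ ℂ).mapMatrix
  have hne : μ ≠ 0 := ne_zero_of_mulVec_eq_smul hunit hv hev
  exact ⟨hre, hne, Complex.exists_pos_eq_I_mul_or_eq_neg_I_mul hre hne⟩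

/-- If `M` is real symmetric positive definite, then every complex eigenvalue
of `J·M` is purely imaginary and nonzero, i.e. of the form `±iλ` with `λ > 0`
real. -/
theorem eigenvalues_JM_purely_imaginary (n : ℕ)
    (M : Matrix (Fin n ⊕ Fin n) (Fin n ⊕ Fin n) ℝ)
    (hMsym : Mᵀ = M) (hMpos : M.PosDef) :
    ∀ (μ : ℂ) (v : (Fin n ⊕ Fin n) → ℂ), v ≠ 0 →
      ((stdSymp n * M).map (fun x : ℝ => (x : ℂ))) *ᵥ v = μ • v →
      μ.re = 0 ∧ μ ≠ 0 ∧
        ∃ lam : ℝ, 0 < lam ∧ (μ = Complex.I * lam ∨ μ = -(Complex.I * lam)) :=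
  eigenvalues_JM_purely_imaginary_general n M hMpos
end
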